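/- In the reduction instance, for every path π=⟨v_0,…,v_k⟩ with v_0 = a_1 and every timing profile T=⟨t_0,…,t_{k−1}⟩ for π, the total reward obtained at vertices other than w is at most 1; that is, Σ_{i : v_i ≠ w} R(v_i, t_{i−1}, t_i) ≤ 1 (with t_{−1}:=0 and t_k:=y_n+K+1). -/

import Mathlib

open MeasureTheory
open scoped Classical

/-- Vertices of the reduction instance: for each hexagon index `i` the vertices
`a i, b i, c i, d i, e i, f i`, plus the two special vertices `u` and `w`. -/
inductive RVert : Type
  | a : ℕ → RVert
  | b : ℕ → RVert
  | c : ℕ → RVert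
  | d : ℕ → RVert
  | e : ℕ → RVert
  | f : ℕ → RVert
  | u : RVert
  | w : RVert
deriving DecidableEq

/-- `κ_i = Σ_{j=1}^{i} x_j` (so `κ_0 = 0`). -/
def kap (x : ℕ → ℕ) (i : ℕ) : ℕ := ∑ j ∈ Finset.Icc 1 i, x j

/-- `y_i = Σ_{j=1}^{i-1} κ_j` (so `y_0 = y_1 = 0`). -/
def yv (x : ℕ → ℕ) (i : ℕ) : ℕ := ∑ j ∈ Finset.Icc 1 (i - 1), kap x j

/-- `α_i = x_i / κ_n`. -/
noncomputable def alphav (x : ℕ → ℕ) (n i : ℕ) : ℝ := (x i : ℝ) / (kap x n : ℝ)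

/-- Edges of the reduction instance: `a_i→b_i, b_i→c_i, c_i→f_i, a_i→d_i,
d_i→e_i, e_i→f_i` for `1 ≤ i ≤ n`, `f_i→a_{i+1}` for `i < n`, `f_n→u`, `u→w`. -/
def redE (n : ℕ) : RVert → RVert → Prop := fun p q =>
  (∃ i, 1 ≤ i ∧ i ≤ n ∧
    ((p = RVert.a i ∧ q = RVert.b i) ∨ (p = RVert.b i ∧ q = RVert.c i) ∨
     (p = RVert.c i ∧ q = RVert.f i) ∨ (p = RVert.a i ∧ q = RVert.d i) ∨
     (p = RVert.d i ∧ q = RVert.e i) ∨ (p = RVert.e i ∧ q = RVert.f i))) ∨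
  (∃ i, 1 ≤ i ∧ i < n ∧ p = RVert.f i ∧ q = RVert.a (i + 1)) ∨
  (p = RVert.f n ∧ q = RVert.u) ∨ (p = RVert.u ∧ q = RVert.w)

/-- Edge lengths: `ℓ(b_i, c_i) = κ_i`, `ℓ(d_i, e_i) = κ_{i-1}`, all other edges
have length `0`. -/
noncomputable def redLen (x : ℕ → ℕ) : RVert → RVert → ℝ := fun p q =>
  match p, q with
  | RVert.b i, RVert.c j => if i = j then (kap x i : ℝ) else 0
  | RVert.d i, RVert.e j => if i = j then (kap x (i - 1) : ℝ) else 0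
  | _, _ => 0

/-- Assistance intervals: `𝓘(b_i) = 𝓘(c_i) = {[y_i, y_i + α_i]}` for
`1 ≤ i ≤ n`, `𝓘(w) = {[y_n + K, y_n + K + 1]}`, and `𝓘` is empty elsewhere. -/
noncomputable def redI (x : ℕ → ℕ) (n K : ℕ) : RVert → Finset (ℝ × ℝ) := fun p =>
  match p with
  | RVert.b i =>
      if 1 ≤ i ∧ i ≤ n then {((yv x i : ℝ), (yv x i : ℝ) + alphav x n i)} else ∅
  | RVert.c i =>
      if 1 ≤ i ∧ i ≤ n then {((yv x i : ℝ), (yv x i : ℝ) + alphav x n i)} else ∅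
  | RVert.w => {((yv x n : ℝ) + K, (yv x n : ℝ) + K + 1)}
  | _ => ∅

/-- `v 0, v 1, …, v k` is a path in the reduction instance. -/
def rIsPath (n : ℕ) (v : ℕ → RVert) (k : ℕ) : Prop :=
  ∀ i, i < k → redE n (v i) (v (i + 1))

/-- `ℓ_π(v_i)`: length of the path from `v 0` to `v i`. -/
noncomputable def rPathLen (x : ℕ → ℕ) (v : ℕ → RVert) (i : ℕ) : ℝ :=
  ∑ j ∈ Finset.range i, redLen x (v j) (v (j + 1))

/-- `ℓ⁺_π(v_i)` (with the convention `ℓ(v_k, v_{k+1}) = 0`). -/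
noncomputable def rEllPlus (x : ℕ → ℕ) (v : ℕ → RVert) (k i : ℕ) : ℝ :=
  rPathLen x v i + (if i < k then redLen x (v i) (v (i + 1)) / 2 else 0)

/-- Reward at a vertex `p` between times `t` and `t'`:
`R(p, t, t') = Σ_{I ∈ 𝓘(p)} λ([t,t'] ∩ I)`. -/
noncomputable def rvReward (x : ℕ → ℕ) (n K : ℕ) (p : RVert) (t t' : ℝ) : ℝ :=
  ∑ q ∈ redI x n K p, (volume (Set.Icc t t' ∩ Set.Icc q.1 q.2)).toReal

/-- `T 0, …, T (k-1)` is a timing profile for the path `v 0, …, v k` with time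
horizon `H = y_n + K + 1`. -/
def rIsTP (x : ℕ → ℕ) (v : ℕ → RVert) (k : ℕ) (H : ℝ) (T : ℕ → ℝ) : Prop :=
  (1 ≤ k → rEllPlus x v k 0 ≤ T 0) ∧
  (∀ i, i + 2 ≤ k → T i + (rEllPlus x v k (i + 1) - rEllPlus x v k i) ≤ T (i + 1)) ∧
  (1 ≤ k → T (k - 1) + (rEllPlus x v k k - rEllPlus x v k (k - 1)) ≤ H)

/-- Reward of a timing profile over horizon `H`:
`R(π, T) = Σ_{i=0}^{k} R(v_i, t_{i-1}, t_i)` with `t_{-1} = 0`, `t_k = H`. -/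
noncomputable def rProfReward (x : ℕ → ℕ) (n K : ℕ) (v : ℕ → RVert) (k : ℕ)
    (H : ℝ) (T : ℕ → ℝ) : ℝ :=
  ∑ i ∈ Finset.range (k + 1),
    rvReward x n K (v i) (if i = 0 then 0 else T (i - 1)) (if i = k then H else T i)

/-- Admissibility: the robot leaves `u` by time `y_n + K` and the path does not
end at `u`. -/
def rAdmissible (x : ℕ → ℕ) (n K : ℕ) (v : ℕ → RVert) (k : ℕ) (T : ℕ → ℝ) : Prop :=
  (∀ i, i < k → v i = RVert.u → T i ≤ (yv x n : ℝ) + K) ∧ v k ≠ RVert.u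

/-!
Off `w`, reward can only be collected inside the assistance intervals of the `b_i` and `c_i`,
whose union has measure at most `Σ α_i ≤ 1`. Along a path the robot occupies its vertices during
consecutive time intervals `[t_{i-1}, t_i]`, which overlap only in endpoints, so the rewards
collected at distinct steps come from essentially disjoint parts of that union.
-/

theorem sum_measure_inter_le_of_pairwiseDisjoint {α ι : Type*} [MeasurableSpace α]
    (μ : Measure α) {s : Finset ι} {A : ι → Set α}
    (hdisj : (s : Set ι).PairwiseDisjoint A) (hA : ∀ i ∈ s, MeasurableSet (A i)) (U : Set α) :
    ∑ i ∈ s, μ (A i ∩ U) ≤ μ U := by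
  calc ∑ i ∈ s, μ (A i ∩ U)
      = ∑ i ∈ s, μ.restrict U (A i) :=
        Finset.sum_congr rfl fun i hi => (Measure.restrict_apply (hA i hi)).symm
    _ = μ.restrict U (⋃ i ∈ s, A i) := (measure_biUnion_finset hdisj hA).symm
    _ ≤ μ.restrict U Set.univ := measure_mono (Set.subset_univ _)
    _ = μ U := Measure.restrict_apply_univ U

theorem sum_volume_Icc_inter_le_of_monotone {g : ℕ → ℝ} (hg : Monotone g) (m : ℕ) (U : Set ℝ) :
    ∑ i ∈ Finset.range m, volume (Set.Icc (g i) (g (i + 1)) ∩ U) ≤ volume U := by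
  have hIoc : ∀ i, volume (Set.Icc (g i) (g (i + 1)) ∩ U) =
      volume (Set.Ioc (g i) (g (i + 1)) ∩ U) :=
    fun i => measure_congr (Ioc_ae_eq_Icc.symm.inter (Filter.EventuallyEq.refl _ _))
  have hdisj : ((Finset.range m : Finset ℕ) : Set ℕ).PairwiseDisjoint
      fun i => Set.Ioc (g i) (g (i + 1)) := fun i _ j _ hij => by
    simpa only [Order.succ_eq_add_one] using hg.pairwise_disjoint_on_Ioc_succ hij
  simp only [hIoc]
  exact sum_measure_inter_le_of_pairwiseDisjoint volume hdisj (fun i _ => measurableSet_Ioc) U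

section Reduction

variable (x : ℕ → ℕ) (n K : ℕ)

def assistSet : Set ℝ :=
  ⋃ j ∈ Finset.Icc 1 n, Set.Icc (yv x j : ℝ) ((yv x j : ℝ) + alphav x n j)

theorem sum_alphav_le_one : ∑ j ∈ Finset.Icc 1 n, alphav x n j ≤ 1 := by
  have hkap : ∑ j ∈ Finset.Icc 1 n, (x j : ℝ) = kap x n := by
    simp only [kap, Nat.cast_sum]
  simp only [alphav]
  rw [← Finset.sum_div, hkap]
  exact div_self_le_one _

theorem volume_assistSet_le_one : volume (assistSet x n) ≤ 1 := by
  calc volume (assistSet x n)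
      ≤ ∑ j ∈ Finset.Icc 1 n, volume (Set.Icc (yv x j : ℝ) ((yv x j : ℝ) + alphav x n j)) :=
        measure_biUnion_finset_le _ _
    _ = ENNReal.ofReal (∑ j ∈ Finset.Icc 1 n, alphav x n j) := by
        rw [ENNReal.ofReal_sum_of_nonneg fun j _ => by unfold alphav; positivity]
        simp only [Real.volume_Icc, add_sub_cancel_left]
    _ ≤ 1 := ENNReal.ofReal_le_one.mpr (sum_alphav_le_one x n)

theorem Icc_subset_assistSet {j : ℕ} (hj : 1 ≤ j ∧ j ≤ n) :
    Set.Icc (yv x j : ℝ) ((yv x j : ℝ) + alphav x n j) ⊆ assistSet x n :=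
  Set.subset_iUnion₂ (s := fun j (_ : j ∈ Finset.Icc 1 n) =>
    Set.Icc (yv x j : ℝ) ((yv x j : ℝ) + alphav x n j)) j (Finset.mem_Icc.mpr hj)

theorem rvReward_le_volume_inter_assistSet {p : RVert} (hp : p ≠ RVert.w) (t t' : ℝ) :
    rvReward x n K p t t' ≤ (volume (Set.Icc t t' ∩ assistSet x n)).toReal := by
  have hfin : volume (Set.Icc t t' ∩ assistSet x n) ≠ ⊤ :=
    measure_ne_top_of_subset Set.inter_subset_left measure_Icc_lt_top.ne
  cases p with
  | b j | c j =>
    by_cases hj : 1 ≤ j ∧ j ≤ n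
    · simp only [rvReward, redI, if_pos hj, Finset.sum_singleton]
      exact ENNReal.toReal_mono hfin
        (measure_mono (Set.inter_subset_inter_right _ (Icc_subset_assistSet x n hj)))
    · simp only [rvReward, redI, if_neg hj, Finset.sum_empty]
      exact ENNReal.toReal_nonneg
  | w => exact absurd rfl hp
  | _ => simp only [rvReward, redI, Finset.sum_empty]; exact ENNReal.toReal_nonneg

end Reduction

section Timing

variable (x : ℕ → ℕ) (v : ℕ → RVert) (k : ℕ)

theorem redLen_nonneg (p q : RVert) : 0 ≤ redLen x p q := by
  cases p <;> cases q <;> simp only [redLen] <;> (try split_ifs) <;> positivity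

theorem rEllPlus_nonneg (i : ℕ) : 0 ≤ rEllPlus x v k i := by
  have hlen : 0 ≤ rPathLen x v i :=
    Finset.sum_nonneg fun j _ => redLen_nonneg x (v j) (v (j + 1))
  have := redLen_nonneg x (v i) (v (i + 1))
  unfold rEllPlus
  split_ifs <;> linarith

theorem rEllPlus_le_succ (i : ℕ) : rEllPlus x v k i ≤ rEllPlus x v k (i + 1) := by
  have := redLen_nonneg x (v i) (v (i + 1))
  have := redLen_nonneg x (v (i + 1)) (v (i + 2))
  unfold rEllPlus rPathLen
  rw [Finset.sum_range_succ]
  split_ifs <;> linarith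

/-- `stepTimes k H T i` is `t_{i-1}`, with `t_{-1} = 0` and `t_k = H`; it stays at `H` beyond `k`. -/
noncomputable def stepTimes (H : ℝ) (T : ℕ → ℝ) (i : ℕ) : ℝ :=
  if i = 0 then 0 else if i ≤ k then T (i - 1) else H

theorem monotone_stepTimes {H : ℝ} {T : ℕ → ℝ} (hT : rIsTP x v k H T) (hH : 0 ≤ H) :
    Monotone (stepTimes k H T) := by
  obtain ⟨hstart, hstep, hend⟩ := hT
  refine monotone_nat_of_le_succ fun i => ?_
  unfold stepTimes
  rcases Nat.eq_zero_or_pos i with rfl | hi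
  · by_cases hk : 1 ≤ k
    · simpa [hk] using (rEllPlus_nonneg x v k 0).trans (hstart hk)
    · simpa [hk] using hH
  simp only [if_neg hi.ne', Nat.add_one_ne_zero, if_false, Nat.add_sub_cancel]
  rcases lt_trichotomy i k with hik | rfl | hik
  · have hTi := hstep (i - 1) (by omega)
    have hell := rEllPlus_le_succ x v k (i - 1)
    rw [Nat.sub_add_cancel hi] at hTi hell
    rw [if_pos hik.le, if_pos (Nat.succ_le_of_lt hik)]
    linarith
  · have hTi := hend hi
    have hell := rEllPlus_le_succ x v i (i - 1)
    rw [Nat.sub_add_cancel hi] at hell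
    rw [if_pos le_rfl, if_neg (Nat.not_succ_le_self i)]
    linarith
  · rw [if_neg (by omega), if_neg (by omega)]

theorem stepTimes_of_le {H : ℝ} {T : ℕ → ℝ} {i : ℕ} (hi : i ≤ k) :
    stepTimes k H T i = if i = 0 then 0 else T (i - 1) := by
  simp only [stepTimes, if_pos hi]

theorem stepTimes_succ_of_le {H : ℝ} {T : ℕ → ℝ} {i : ℕ} (hi : i ≤ k) :
    stepTimes k H T (i + 1) = if i = k then H else T i := by
  simp only [stepTimes, Nat.add_one_ne_zero, if_false, Nat.add_sub_cancel]
  rcases hi.lt_or_eq with hik | rfl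
  · rw [if_pos (Nat.succ_le_of_lt hik), if_neg hik.ne]
  · rw [if_neg (Nat.not_succ_le_self i), if_pos rfl]

end Timing

theorem stmt14_general (n : ℕ) (x : ℕ → ℕ)
    (K : ℕ)
    (v : ℕ → RVert) (k : ℕ)
    (T : ℕ → ℝ) (hT : rIsTP x v k ((yv x n : ℝ) + K + 1) T) :
    (∑ i ∈ (Finset.range (k + 1)).filter (fun i => v i ≠ RVert.w),
      rvReward x n K (v i) (if i = 0 then 0 else T (i - 1))
        (if i = k then (yv x n : ℝ) + K + 1 else T i)) ≤ 1 := by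
  set H : ℝ := (yv x n : ℝ) + K + 1
  set g := stepTimes k H T
  have hg : Monotone g := monotone_stepTimes x v k hT (by positivity)
  have hfin : ∀ i ∈ Finset.range (k + 1), volume (Set.Icc (g i) (g (i + 1)) ∩ assistSet x n) ≠ ⊤ :=
    fun i _ => measure_ne_top_of_subset Set.inter_subset_left measure_Icc_lt_top.ne
  calc _ = ∑ i ∈ (Finset.range (k + 1)).filter (fun i => v i ≠ RVert.w),
          rvReward x n K (v i) (g i) (g (i + 1)) := by
        refine Finset.sum_congr rfl fun i hi => ?_
        have hik : i ≤ k := Nat.lt_succ_iff.mp (Finset.mem_range.mp (Finset.mem_filter.mp hi).1)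
        rw [← stepTimes_of_le k (H := H) (T := T) hik, ← stepTimes_succ_of_le k (H := H) hik]
    _ ≤ ∑ i ∈ (Finset.range (k + 1)).filter (fun i => v i ≠ RVert.w),
          (volume (Set.Icc (g i) (g (i + 1)) ∩ assistSet x n)).toReal :=
        Finset.sum_le_sum fun i hi =>
          rvReward_le_volume_inter_assistSet x n K (Finset.mem_filter.mp hi).2 _ _
    _ ≤ ∑ i ∈ Finset.range (k + 1), (volume (Set.Icc (g i) (g (i + 1)) ∩ assistSet x n)).toReal :=
        Finset.sum_le_sum_of_subset_of_nonneg (Finset.filter_subset _ _)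
          fun _ _ _ => ENNReal.toReal_nonneg
    _ = (∑ i ∈ Finset.range (k + 1), volume (Set.Icc (g i) (g (i + 1)) ∩ assistSet x n)).toReal :=
        (ENNReal.toReal_sum hfin).symm
    _ ≤ 1 := ENNReal.toReal_le_of_le_ofReal zero_le_one <| by
        rw [ENNReal.ofReal_one]
        exact (sum_volume_Icc_inter_le_of_monotone hg _ _).trans (volume_assistSet_le_one x n)

/-- **Lemma: reward away from `w` is at most 1.** For every path
from `a_1` and every timing profile, the total reward obtained at vertices
other than `w` is at most `1`. -/
theorem stmt14 (n : ℕ) (hn : 1 ≤ n) (x : ℕ → ℕ)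
    (hx : ∀ i, 1 ≤ i → i ≤ n → 0 < x i)
    (hmono : ∀ i j, 1 ≤ i → i ≤ j → j ≤ n → x i ≤ x j)
    (K : ℕ) (hK : 0 < K) (hKn : K ≤ kap x n)
    (v : ℕ → RVert) (k : ℕ) (hpath : rIsPath n v k) (h0 : v 0 = RVert.a 1)
    (T : ℕ → ℝ) (hT : rIsTP x v k ((yv x n : ℝ) + K + 1) T) :
    (∑ i ∈ (Finset.range (k + 1)).filter (fun i => v i ≠ RVert.w),
      rvReward x n K (v i) (if i = 0 then 0 else T (i - 1))
        (if i = k then (yv x n : ℝ) + K + 1 else T i)) ≤ 1 :=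
  stmt14_general n x K v k T hT
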